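/- arXiv:2509.17402 — 2 statements merged into one kernel-verified Lean document; each statement's English description precedes it below -/
import Mathlib

section
/- Let n ≥ 1, let H : ℝⁿ × ℝⁿ → ℝ be of class C², let λ, ε > 0 and x₀ ∈ ℝⁿ. Let u, v : ℝⁿ → ℝ be ℤⁿ-periodic C² functions satisfying ⟨∂H/∂p(x, Du(x)), Dv(x)⟩ + λv(x) = Δu(x) + εΔv(x) for all x ∈ ℝⁿ, and let θ be a weak adjoint density for u at x₀ (with parameters λ, ε). Then λ|v(x₀)| ≤ (∫_{[0,1)ⁿ} |Δu(x)|² θ(x) dx)^{1/2}. -/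
open MeasureTheory Real Filter
open scoped RealInnerProductSpace

noncomputable section

/-- Euclidean space ℝⁿ. -/
abbrev Em (n : ℕ) := EuclideanSpace ℝ (Fin n)

/-- The integer vector k ∈ ℤⁿ as an element of ℝⁿ. -/
def intVec {n : ℕ} (k : Fin n → ℤ) : Em n := WithLp.toLp 2 (fun i => (k i : ℝ))

/-- ℤⁿ-periodicity of a real-valued function on ℝⁿ. -/
def ZPeriodic {n : ℕ} (u : Em n → ℝ) : Prop :=
  ∀ (x : Em n) (k : Fin n → ℤ), u (x + intVec k) = u x

/-- ℤⁿ-periodicity of a vector field on ℝⁿ. -/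
def ZPeriodicV {n : ℕ} (b : Em n → Em n) : Prop :=
  ∀ (x : Em n) (k : Fin n → ℤ), b (x + intVec k) = b x

/-- The fundamental domain [0,1)ⁿ of the torus ℝⁿ/ℤⁿ. -/
def cube (n : ℕ) : Set (Em n) := {x | ∀ i, x i ∈ Set.Ico (0:ℝ) 1}

/-- The Laplacian of u, as the trace of the second derivative. -/
def lap {n : ℕ} (u : Em n → ℝ) (x : Em n) : ℝ :=
  ∑ i, iteratedFDeriv ℝ 2 u x ![EuclideanSpace.single i 1, EuclideanSpace.single i 1]

/-- The (i,j) entry of the Hessian matrix of u at x. -/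
def hess {n : ℕ} (u : Em n → ℝ) (x : Em n) (i j : Fin n) : ℝ :=
  iteratedFDeriv ℝ 2 u x ![EuclideanSpace.single i 1, EuclideanSpace.single j 1]

/-- The squared Frobenius norm |D²u(x)|² of the Hessian of u at x. -/
def hessSq {n : ℕ} (u : Em n → ℝ) (x : Em n) : ℝ :=
  ∑ i, ∑ j, (hess u x i j)^2

/-- Divergence of a vector field. -/
def diver {n : ℕ} (V : Em n → Em n) (x : Em n) : ℝ :=
  ∑ i, fderiv ℝ (fun y => V y i) x (EuclideanSpace.single i 1)

/-- Partial gradient ∂H/∂p of H(x,p) in the second variable. -/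
def Hp {n : ℕ} (H : Em n × Em n → ℝ) (x p : Em n) : Em n :=
  gradient (fun q => H (x, q)) p

/-- Partial gradient ∂H/∂x of H(x,p) in the first variable. -/
def Hx {n : ℕ} (H : Em n × Em n → ℝ) (x p : Em n) : Em n :=
  gradient (fun y => H (y, p)) x

/-- A Tonelli Hamiltonian: C², ℤⁿ-periodic in x, positive definite Hessian in p,
uniformly superlinear in p. -/
structure Tonelli {n : ℕ} (H : Em n × Em n → ℝ) : Prop where
  smooth : ContDiff ℝ 2 H
  periodic : ∀ (x p : Em n) (k : Fin n → ℤ), H (x + intVec k, p) = H (x, p)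
  posdef : ∀ (x p v : Em n), v ≠ 0 →
    0 < iteratedFDeriv ℝ 2 (fun q => H (x, q)) p ![v, v]
  superlinear : ∀ A : ℝ, ∃ R : ℝ, ∀ (x p : Em n), R ≤ ‖p‖ → A * ‖p‖ ≤ H (x, p)

/-- A classical (ℤⁿ-periodic, C²) solution of λu + H(x,Du) = εΔu. -/
def ClassicalSol {n : ℕ} (H : Em n × Em n → ℝ) (lam eps : ℝ) (u : Em n → ℝ) : Prop :=
  ContDiff ℝ 2 u ∧ ZPeriodic u ∧
    ∀ x, lam * u x + H (x, gradient u x) = eps * lap u x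

/-- A ℤⁿ-periodic continuous viscosity solution of λu + H(x,Du) = 0. -/
def ViscositySol {n : ℕ} (H : Em n × Em n → ℝ) (lam : ℝ) (u : Em n → ℝ) : Prop :=
  Continuous u ∧ ZPeriodic u ∧
  ∀ φ : Em n → ℝ, ContDiff ℝ 1 φ →
    (∀ x, IsLocalMax (fun y => u y - φ y) x → lam * u x + H (x, gradient φ x) ≤ 0) ∧
    (∀ x, IsLocalMin (fun y => u y - φ y) x → 0 ≤ lam * u x + H (x, gradient φ x))

/-- A weak adjoint density for u at x₀ with parameters λ, ε. -/
def AdjointDensity {n : ℕ} (H : Em n × Em n → ℝ) (lam eps : ℝ) (u : Em n → ℝ)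
    (x₀ : Em n) (θ : Em n → ℝ) : Prop :=
  ZPeriodic θ ∧ (∀ x, 0 ≤ θ x) ∧ IntegrableOn θ (cube n) ∧
  (∫ x in cube n, θ x) = 1 ∧
  ∀ ψ : Em n → ℝ, ContDiff ℝ 2 ψ → ZPeriodic ψ →
    (∫ x in cube n, (⟪gradient ψ x, Hp H x (gradient u x)⟫ - eps * lap ψ x) * θ x)
      = lam * ψ x₀ - lam * ∫ x in cube n, ψ x * θ x

/-- The Lagrangian associated to H by Legendre transform. -/
def Lag {n : ℕ} (H : Em n × Em n → ℝ) (x v : Em n) : ℝ :=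
  ⨆ p : Em n, (⟪v, p⟫ - H (x, p))

/-! Testing the adjoint identity with `ψ = v` and substituting the linearized equation leaves
`λ v(x₀) = ∫ Δu θ`: the value of `λ v` at `x₀` is the `θ`-average of `Δu`. Since `θ` is a
probability density on the torus, the square of this average is at most `∫ |Δu|² θ`
(the `θ`-variance of `Δu` is nonnegative). -/

theorem cube_eq_ofLp_preimage_pi (n : ℕ) :
    cube n = WithLp.ofLp ⁻¹' Set.univ.pi fun _ => Set.Ico (0 : ℝ) 1 := by
  ext
  simp [cube]

theorem measurableSet_cube (n : ℕ) : MeasurableSet (cube n) := by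
  rw [cube_eq_ofLp_preimage_pi]
  exact (PiLp.continuous_ofLp 2 _).measurable (MeasurableSet.univ_pi fun _ => measurableSet_Ico)

theorem MeasureTheory.IntegrableOn.continuous_mul_cube {n : ℕ} {f θ : Em n → ℝ}
    (hf : Continuous f) (hθ : IntegrableOn θ (cube n)) :
    IntegrableOn (fun x => f x * θ x) (cube n) := by
  have hK : IsCompact (WithLp.ofLp ⁻¹' Set.univ.pi fun _ => Set.Icc (0 : ℝ) 1 : Set (Em n)) :=
    (PiLp.homeomorph 2 _).isCompact_preimage.mpr (isCompact_univ_pi fun _ => isCompact_Icc)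
  refine hθ.continuousOn_mul_of_subset hf.continuousOn hK (measurableSet_cube n) ?_
  rw [cube_eq_ofLp_preimage_pi]
  exact Set.preimage_mono (Set.pi_mono fun _ _ => Set.Ico_subset_Icc_self)

theorem ContDiff.continuous_lap {n : ℕ} {u : Em n → ℝ} (hu : ContDiff ℝ 2 u) :
    Continuous (lap u) :=
  continuous_finsetSum _ fun _ _ =>
    (ContinuousMultilinearMap.apply ℝ (fun _ : Fin 2 => Em n) ℝ _).continuous.comp
      (hu.continuous_iteratedFDeriv le_rfl)

theorem sq_integral_mul_le_integral_sq_mul {α : Type*} [MeasurableSpace α] {μ : Measure α}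
    {f θ : α → ℝ} (hθ_nonneg : ∀ x, 0 ≤ θ x) (hθ : Integrable θ μ) (hθ_one : ∫ x, θ x ∂μ = 1)
    (hfθ : Integrable (fun x => f x * θ x) μ) (hf2θ : Integrable (fun x => f x ^ 2 * θ x) μ) :
    (∫ x, f x * θ x ∂μ) ^ 2 ≤ ∫ x, f x ^ 2 * θ x ∂μ := by
  set m := ∫ x, f x * θ x ∂μ
  have hvar : 0 ≤ ∫ x, (f x - m) ^ 2 * θ x ∂μ :=
    integral_nonneg fun x => mul_nonneg (sq_nonneg _) (hθ_nonneg x)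
  have hexpand : (fun x => (f x - m) ^ 2 * θ x)
      = fun x => f x ^ 2 * θ x - 2 * m * (f x * θ x) + m ^ 2 * θ x := by
    funext x; ring
  rw [hexpand, integral_add, integral_sub, integral_const_mul, integral_const_mul, hθ_one]
    at hvar
  · nlinarith
  exacts [hf2θ, hfθ.const_mul _, hf2θ.sub (hfθ.const_mul _), hθ.const_mul _]

theorem AdjointDensity.setIntegral_lap_mul_eq {n : ℕ} {H : Em n × Em n → ℝ} {lam eps : ℝ}
    {x₀ : Em n} {u v θ : Em n → ℝ} (hθ : AdjointDensity H lam eps u x₀ θ) (hu : ContDiff ℝ 2 u)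
    (hv : ContDiff ℝ 2 v) (hvp : ZPeriodic v)
    (heq : ∀ x : Em n,
      ⟪Hp H x (gradient u x), gradient v x⟫ + lam * v x = lap u x + eps * lap v x) :
    ∫ x in cube n, lap u x * θ x = lam * v x₀ := by
  obtain ⟨-, -, hθ_int, -, hθ_adj⟩ := hθ
  have hpoint : ∀ x, (⟪gradient v x, Hp H x (gradient u x)⟫ - eps * lap v x) * θ x
      = lap u x * θ x - lam * (v x * θ x) := fun x => by
    rw [real_inner_comm]; linear_combination θ x * heq x
  have hadj := hθ_adj v hv hvp
  simp_rw [hpoint] at hadj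
  rw [integral_sub (hθ_int.continuous_mul_cube hu.continuous_lap)
    ((hθ_int.continuous_mul_cube hv.continuous).const_mul lam), integral_const_mul] at hadj
  linarith

theorem adjoint_linearized_estimate_general
    (n : ℕ) (H : Em n × Em n → ℝ)
    (lam eps : ℝ) (hlam : 0 < lam) (x₀ : Em n)
    (u v : Em n → ℝ) (hu : ContDiff ℝ 2 u)
    (hv : ContDiff ℝ 2 v) (hvp : ZPeriodic v)
    (heq : ∀ x : Em n,
      ⟪Hp H x (gradient u x), gradient v x⟫ + lam * v x = lap u x + eps * lap v x)
    (θ : Em n → ℝ) (hθ : AdjointDensity H lam eps u x₀ θ) :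
    lam * |v x₀| ≤ Real.sqrt (∫ x in cube n, (lap u x)^2 * θ x) := by
  have hmean := hθ.setIntegral_lap_mul_eq hu hv hvp heq
  obtain ⟨-, hθ_nonneg, hθ_int, hθ_one, -⟩ := hθ
  have hjensen := sq_integral_mul_le_integral_sq_mul hθ_nonneg hθ_int hθ_one
    (hθ_int.continuous_mul_cube hu.continuous_lap)
    (hθ_int.continuous_mul_cube (hu.continuous_lap.pow 2))
  rw [← abs_of_pos hlam, ← abs_mul, ← Real.sqrt_sq_eq_abs, ← hmean]
  exact Real.sqrt_le_sqrt hjensen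

theorem adjoint_linearized_estimate
    (n : ℕ) (hn : 1 ≤ n) (H : Em n × Em n → ℝ) (hH : ContDiff ℝ 2 H)
    (lam eps : ℝ) (hlam : 0 < lam) (heps : 0 < eps) (x₀ : Em n)
    (u v : Em n → ℝ) (hu : ContDiff ℝ 2 u) (hup : ZPeriodic u)
    (hv : ContDiff ℝ 2 v) (hvp : ZPeriodic v)
    (heq : ∀ x : Em n,
      ⟪Hp H x (gradient u x), gradient v x⟫ + lam * v x = lap u x + eps * lap v x)
    (θ : Em n → ℝ) (hθ : AdjointDensity H lam eps u x₀ θ) :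
    lam * |v x₀| ≤ Real.sqrt (∫ x in cube n, (lap u x)^2 * θ x) :=
  adjoint_linearized_estimate_general n H lam eps hlam x₀ u v hu hv hvp heq θ hθ

end
end

section
/- Let n ≥ 1 and let H : ℝⁿ × ℝⁿ → ℝ be a Tonelli Hamiltonian. For each λ ∈ (0,1] let u_λ be a ℤⁿ-periodic continuous viscosity solution of λu_λ + H(x, Du_λ) = 0, and for each λ, ε ∈ (0,1] let u_λ^ε be a classical solution of the viscous discounted equation λu_λ^ε + H(x, Du_λ^ε) = εΔu_λ^ε. Suppose there is a continuous ℤⁿ-periodic function u₀ with sup_x |u_λ(x) − u₀(x)| → 0 as λ → 0⁺, and let ε : (0,1] → (0,1] satisfy ε(λ)/λ² → 0 as λ → 0⁺. Then sup_x |u_λ^{ε(λ)}(x) − u₀(x)| → 0 as λ → 0⁺. -/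
open MeasureTheory Real Filter
open scoped RealInnerProductSpace

noncomputable section

/-!
Both `u_λ` and `u_λ^ε` are viscosity sub- and supersolutions of `λw + H(x, Dw) = εΔw` tested
against `C²` functions (with `ε = 0` for `u_λ`). Doubling the variables with the penalization
`‖x - y‖² / (2√ε)`, the sub- and supersolution inequalities at a maximum point share the momentum
`p = (x - y) / √ε`. Superlinearity of `H` bounds `p`, hence `‖x - y‖ ≤ K√ε`; by periodicity
`H(·, p)` is Lipschitz uniformly in bounded `p`, and the viscous term contributes at most `n√ε`.
So `λ |u_λ^ε - u_λ| ≤ C√ε`, i.e. `|u_λ^ε - u_λ| ≤ C √(ε / λ²) → 0`.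
-/

open scoped NNReal Topology

section Calculus

variable {E : Type*} [NormedAddCommGroup E]

theorem IsLocalMax.iteratedFDeriv_two_apply_nonpos [NormedSpace ℝ E] {f : E → ℝ} {x : E}
    (hf : ContDiff ℝ 2 f) (h : IsLocalMax f x) (v : E) : iteratedFDeriv ℝ 2 f x ![v, v] ≤ 0 := by
  set g : ℝ → ℝ := fun t => f (x + t • v)
  have hg : g = (fun z => f (x + z)) ∘ ContinuousLinearMap.smulRight (1 : ℝ →L[ℝ] ℝ) v := by
    ext t; simp [g]
  have hg'' : deriv (deriv g) 0 = iteratedFDeriv ℝ 2 f x ![v, v] := by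
    have hshift : ContDiff ℝ 2 fun z => f (x + z) := hf.comp (contDiff_const.add contDiff_id)
    rw [← iteratedDeriv_one, ← iteratedDeriv_succ', iteratedDeriv_eq_iteratedFDeriv, hg,
      one_add_one_eq_two, ContinuousLinearMap.iteratedFDeriv_comp_right (i := 2) _ hshift _ le_rfl]
    simp only [ContinuousLinearMap.smulRight_apply, one_apply_eq_self, zero_smul, add_zero,
      iteratedFDeriv_comp_add_left, ContinuousMultilinearMap.compContinuousLinearMap_apply,
      one_smul]
    congr 1
    ext i
    fin_cases i <;> rfl
  have hmax : IsLocalMax g 0 :=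
    IsLocalMax.comp_continuous (by simpa using h) (by fun_prop)
  by_contra! hpos
  -- otherwise the second-derivative test makes `g` a local minimum too, hence locally constant
  have hmin : IsLocalMin g 0 := isLocalMin_of_deriv_deriv_pos (hg'' ▸ hpos) hmax.deriv_eq_zero
    (hf.continuous.comp (by fun_prop)).continuousAt
  have hconst : g =ᶠ[𝓝 0] fun _ => g 0 := (hmax.and hmin).mono fun t ht => le_antisymm ht.1 ht.2
  have := hconst.deriv.deriv_eq
  simp only [deriv_const', deriv_const] at this
  linarith

theorem gradient_eq_of_isLocalMax_sub [InnerProductSpace ℝ E] [CompleteSpace E] {f φ : E → ℝ}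
    {x : E} (hf : DifferentiableAt ℝ f x) (hφ : DifferentiableAt ℝ φ x)
    (h : IsLocalMax (fun y => f y - φ y) x) :
    gradient f x = gradient φ x := by
  have h0 := h.fderiv_eq_zero
  rw [fderiv_fun_sub hf hφ, sub_eq_zero] at h0
  rw [gradient, gradient, h0]

theorem contDiff_mul_norm_sub_sq [InnerProductSpace ℝ E] {k : WithTop ℕ∞} (a : ℝ) (c : E) :
    ContDiff ℝ k fun y => a * ‖y - c‖ ^ 2 :=
  contDiff_const.mul ((contDiff_id.sub contDiff_const).norm_sq ℝ)

theorem hasFDerivAt_mul_norm_sub_sq [InnerProductSpace ℝ E] (a : ℝ) (c x : E) :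
    HasFDerivAt (fun y => a * ‖y - c‖ ^ 2) ((2 * a) • innerSL ℝ (x - c)) x := by
  refine ((((hasFDerivAt_id x).sub_const c).norm_sq).const_mul a).congr_fderiv ?_
  ext w
  simp only [id_eq, map_sub, ContinuousLinearMap.comp_id, two_smul, smul_add, add_apply,
    smul_apply, sub_apply, coe_innerSL_apply, smul_eq_mul]
  ring

end Calculus

section TestFunctions

variable {n : ℕ}

theorem lap_le_of_isLocalMax_sub {f φ : Em n → ℝ} {x : Em n} (hf : ContDiff ℝ 2 f)
    (hφ : ContDiff ℝ 2 φ) (h : IsLocalMax (fun y => f y - φ y) x) : lap f x ≤ lap φ x := by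
  refine Finset.sum_le_sum fun i _ => ?_
  have := h.iteratedFDeriv_two_apply_nonpos (hf.sub hφ) (EuclideanSpace.single i 1)
  rwa [fun_iteratedFDeriv_sub_apply hf.contDiffAt hφ.contDiffAt,
    sub_apply, sub_nonpos] at this

theorem lap_const (c : ℝ) (x : Em n) : lap (fun _ => c) x = 0 := by
  simp [lap, iteratedFDeriv_const_of_ne two_ne_zero]

theorem hasGradientAt_mul_norm_sub_sq (a : ℝ) (c x : Em n) :
    HasGradientAt (fun y => a * ‖y - c‖ ^ 2) ((2 * a) • (x - c)) x := by
  rw [hasGradientAt_iff_hasFDerivAt]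
  refine (hasFDerivAt_mul_norm_sub_sq a c x).congr_fderiv ?_
  ext w
  simp [InnerProductSpace.toDual_apply_apply]

theorem lap_mul_norm_sub_sq (a : ℝ) (c x : Em n) :
    lap (fun y => a * ‖y - c‖ ^ 2) x = 2 * a * n := by
  set L : Em n →L[ℝ] Em n →L[ℝ] ℝ := (2 * a) • innerSL ℝ
  have hD : fderiv ℝ (fun y => a * ‖y - c‖ ^ 2) = fun y => L y - L c := funext fun y => by
    rw [(hasFDerivAt_mul_norm_sub_sq a c y).fderiv, ← map_sub]
    rfl
  have hL : ∀ i : Fin n, L (EuclideanSpace.single i 1) (EuclideanSpace.single i 1) = 2 * a :=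
    fun i => by
      change 2 * a * ⟪EuclideanSpace.single i (1 : ℝ), EuclideanSpace.single i 1⟫ = 2 * a
      simp
  simp [lap, iteratedFDeriv_two_apply, hD, (L.hasFDerivAt.sub_const (L c)).fderiv, hL, mul_comm]

end TestFunctions

section Periodic

variable {n : ℕ}

theorem exists_intVec_norm_le (y : Em n) : ∃ k : Fin n → ℤ, ‖y + intVec k‖ ≤ n := by
  refine ⟨fun i => -⌊y i⌋, ?_⟩
  have hcoord : ∀ i, (y + intVec fun i => -⌊y i⌋) i = Int.fract (y i) := fun i => by
    simp [intVec, Int.fract, sub_eq_add_neg]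
  have hsq : ‖y + intVec fun i => -⌊y i⌋‖ ^ 2 ≤ (n : ℝ) ^ 2 := by
    calc _ = ∑ i, Int.fract (y i) ^ 2 := by simp [EuclideanSpace.real_norm_sq_eq, hcoord]
      _ ≤ ∑ _i : Fin n, (1 : ℝ) := Finset.sum_le_sum fun i _ => by
          nlinarith [Int.fract_nonneg (y i), Int.fract_lt_one (y i)]
      _ = n := by simp
      _ ≤ (n : ℝ) ^ 2 := by exact_mod_cast Nat.le_self_pow two_ne_zero n
  exact (pow_le_pow_iff_left₀ (norm_nonneg _) n.cast_nonneg two_ne_zero).1 hsq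

theorem ZPeriodic.exists_forall_ge {f : Em n → ℝ} (hp : ZPeriodic f) (hc : Continuous f) :
    ∃ x, ∀ y, f y ≤ f x := by
  obtain ⟨x, -, hmax⟩ := (isCompact_closedBall (0 : Em n) n).exists_isMaxOn
    ⟨0, Metric.mem_closedBall_self n.cast_nonneg⟩ hc.continuousOn
  refine ⟨x, fun y => ?_⟩
  obtain ⟨k, hk⟩ := exists_intVec_norm_le y
  rw [← hp y k]
  exact hmax (by simpa using hk)

theorem ZPeriodic.exists_forall_le {f : Em n → ℝ} (hp : ZPeriodic f) (hc : Continuous f) :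
    ∃ x, ∀ y, f x ≤ f y := by
  obtain ⟨x, hx⟩ := ZPeriodic.exists_forall_ge (f := fun y => -f y) (fun y k => by simp [hp y k])
    hc.neg
  exact ⟨x, fun y => neg_le_neg_iff.1 (hx y)⟩

theorem exists_le_of_periodic_fst {g : Em n × Em n → ℝ} (hc : Continuous g)
    (hp : ∀ x p (k : Fin n → ℤ), g (x + intVec k, p) = g (x, p)) (R : ℝ) :
    ∃ C, ∀ x p, ‖p‖ ≤ R → g (x, p) ≤ C := by
  obtain ⟨C, hC⟩ := ((isCompact_closedBall (0 : Em n) n).prod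
    (isCompact_closedBall (0 : Em n) R)).bddAbove_image hc.continuousOn
  refine ⟨C, fun x p hp' => ?_⟩
  obtain ⟨k, hk⟩ := exists_intVec_norm_le x
  rw [← hp x p k]
  exact hC ⟨(x + intVec k, p), ⟨by simpa using hk, by simpa using hp'⟩, rfl⟩

theorem exists_forall_ge_of_diag_periodic {Ψ : Em n × Em n → ℝ} (hc : Continuous Ψ)
    (hp : ∀ x y (k : Fin n → ℤ), Ψ (x + intVec k, y + intVec k) = Ψ (x, y))
    {B : ℝ} (hB : ∀ x y, Ψ (x, y) ≤ B - ‖x - y‖) : ∃ z, ∀ x y, Ψ (x, y) ≤ Ψ z := by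
  set D := max 0 (B - Ψ (0, 0))
  obtain ⟨z, hz, hmax⟩ := ((isCompact_closedBall (0 : Em n) n).prod
    (isCompact_closedBall (0 : Em n) (n + D))).exists_isMaxOn
    ⟨(0, 0), by simp [D, add_nonneg]⟩ hc.continuousOn
  refine ⟨z, fun x y => ?_⟩
  rcases le_or_gt D ‖x - y‖ with hfar | hnear
  · calc Ψ (x, y) ≤ B - D := by linarith [hB x y]
      _ ≤ Ψ (0, 0) := by linarith [le_max_right 0 (B - Ψ (0, 0))]
      _ ≤ Ψ z := hmax ⟨by simp, by simp [D, add_nonneg]⟩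
  · obtain ⟨k, hk⟩ := exists_intVec_norm_le x
    have hy : ‖y + intVec k‖ ≤ n + D := by
      calc ‖y + intVec k‖ = ‖(x + intVec k) - (x - y)‖ := by congr 1; abel
        _ ≤ n + D := (norm_sub_le _ _).trans (add_le_add hk hnear.le)
    rw [← hp x y k]
    exact hmax ⟨by simpa using hk, by simpa using hy⟩

end Periodic

section Hamiltonian

variable {n : ℕ} {H : Em n × Em n → ℝ}

theorem fderiv_add_intVec_fst (hp : ∀ x p (k : Fin n → ℤ), H (x + intVec k, p) = H (x, p))
    (x p : Em n) (k : Fin n → ℤ) : fderiv ℝ H (x + intVec k, p) = fderiv ℝ H (x, p) := by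
  have hH : (fun w => H (w + (intVec k, 0))) = H := funext fun w => by
    simpa [Prod.add_def] using hp w.1 w.2 k
  nth_rewrite 2 [← hH]
  rw [fderiv_comp_add_right, Prod.mk_add_mk, add_zero]

theorem exists_lipschitzWith_fst (hH : ContDiff ℝ 1 H)
    (hp : ∀ x p (k : Fin n → ℤ), H (x + intVec k, p) = H (x, p)) (R : ℝ) :
    ∃ C : ℝ≥0, ∀ p : Em n, ‖p‖ ≤ R → LipschitzWith C fun x => H (x, p) := by
  obtain ⟨C, hC⟩ := exists_le_of_periodic_fst (hH.continuous_fderiv one_ne_zero).norm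
    (fun x p k => by rw [fderiv_add_intVec_fst hp]) R
  have hL : LipschitzOnWith C.toNNReal H (Set.univ ×ˢ Metric.closedBall 0 R) :=
    (convex_univ.prod (convex_closedBall 0 R)).lipschitzOnWith_of_nnnorm_fderiv_le
      (fun w _ => (hH.differentiable one_ne_zero) w)
      (fun w hw => by
        rw [← NNReal.coe_le_coe, coe_nnnorm, Real.coe_toNNReal']
        exact (hC w.1 w.2 (by simpa using hw.2)).trans (le_max_left _ _))
  refine ⟨C.toNNReal, fun p hp' =>
    LipschitzWith.of_dist_le_mul (f := fun x : Em n => H (x, p)) fun x y => ?_⟩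
  have hmem : ∀ z : Em n, (z, p) ∈ Set.univ ×ˢ Metric.closedBall 0 R := fun z => by simpa using hp'
  simpa [Prod.dist_eq] using hL.dist_le_mul _ (hmem x) _ (hmem y)

theorem Tonelli.exists_abs_le (hH : Tonelli H) : ∃ M, ∀ x, |H (x, 0)| ≤ M := by
  obtain ⟨M, hM⟩ := exists_le_of_periodic_fst (g := fun w => |H w|) hH.smooth.continuous.abs
    (fun x p k => by rw [hH.periodic]) 0
  exact ⟨M, fun x => hM x 0 (by simp)⟩

theorem Tonelli.exists_norm_le_of_le (hH : Tonelli H) (B : ℝ) :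
    ∃ K, ∀ x p, H (x, p) ≤ B → ‖p‖ ≤ K := by
  obtain ⟨R, hR⟩ := hH.superlinear 1
  refine ⟨max R B, fun x p hle => ?_⟩
  by_contra! hgt
  have := hR x p (le_of_max_le_left hgt.le)
  linarith [(le_max_right R B).trans_lt hgt]

end Hamiltonian

section ViscousSolutions

def IsViscousSubsol {n : ℕ} (H : Em n × Em n → ℝ) (lam eps : ℝ) (f : Em n → ℝ) : Prop :=
  ∀ φ : Em n → ℝ, ContDiff ℝ 2 φ → ∀ x, IsLocalMax (fun y => f y - φ y) x →
    lam * f x + H (x, gradient φ x) ≤ eps * lap φ x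

def IsViscousSupersol {n : ℕ} (H : Em n × Em n → ℝ) (lam eps : ℝ) (f : Em n → ℝ) : Prop :=
  ∀ φ : Em n → ℝ, ContDiff ℝ 2 φ → ∀ x, IsLocalMin (fun y => f y - φ y) x →
    eps * lap φ x ≤ lam * f x + H (x, gradient φ x)

variable {n : ℕ} {H : Em n × Em n → ℝ}

theorem ViscositySol.isViscousSubsol {lam : ℝ} {u : Em n → ℝ} (hu : ViscositySol H lam u) :
    IsViscousSubsol H lam 0 u := fun φ hφ x hx => by
  simpa using (hu.2.2 φ (hφ.of_le one_le_two)).1 x hx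

theorem ViscositySol.isViscousSupersol {lam : ℝ} {u : Em n → ℝ} (hu : ViscositySol H lam u) :
    IsViscousSupersol H lam 0 u := fun φ hφ x hx => by
  simpa using (hu.2.2 φ (hφ.of_le one_le_two)).2 x hx

theorem ClassicalSol.isViscousSubsol {lam eps : ℝ} {U : Em n → ℝ} (hU : ClassicalSol H lam eps U)
    (heps : 0 ≤ eps) : IsViscousSubsol H lam eps U := fun φ hφ x hx => by
  rw [← gradient_eq_of_isLocalMax_sub (hU.1.differentiable two_ne_zero x)
    (hφ.differentiable two_ne_zero x) hx, hU.2.2 x]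
  exact mul_le_mul_of_nonneg_left (lap_le_of_isLocalMax_sub hU.1 hφ hx) heps

theorem ClassicalSol.isViscousSupersol {lam eps : ℝ} {U : Em n → ℝ}
    (hU : ClassicalSol H lam eps U) (heps : 0 ≤ eps) : IsViscousSupersol H lam eps U :=
    fun φ hφ x hx => by
  have hx' : IsLocalMax (fun y => φ y - U y) x := (IsLocalMin.neg hx).congr (by simp)
  rw [gradient_eq_of_isLocalMax_sub (hφ.differentiable two_ne_zero x)
    (hU.1.differentiable two_ne_zero x) hx', hU.2.2 x]
  exact mul_le_mul_of_nonneg_left (lap_le_of_isLocalMax_sub hφ hU.1 hx') heps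

theorem IsViscousSubsol.mul_le {lam eps M : ℝ} {f : Em n → ℝ} (hf : IsViscousSubsol H lam eps f)
    (hc : Continuous f) (hp : ZPeriodic f) (hlam : 0 ≤ lam) (hM : ∀ x, -M ≤ H (x, 0))
    (x : Em n) : lam * f x ≤ M := by
  obtain ⟨xM, hxM⟩ := hp.exists_forall_ge hc
  have h := hf (fun _ => 0) contDiff_const xM (.of_forall fun y => by simpa using hxM y)
  rw [gradient_fun_const, lap_const, mul_zero] at h
  linarith [hM xM, mul_le_mul_of_nonneg_left (hxM x) hlam]

theorem IsViscousSupersol.le_mul {lam eps M : ℝ} {f : Em n → ℝ}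
    (hf : IsViscousSupersol H lam eps f) (hc : Continuous f) (hp : ZPeriodic f) (hlam : 0 ≤ lam)
    (hM : ∀ x, H (x, 0) ≤ M) (x : Em n) : -M ≤ lam * f x := by
  obtain ⟨xm, hxm⟩ := hp.exists_forall_le hc
  have h := hf (fun _ => 0) contDiff_const xm (.of_forall fun y => by simpa using hxm y)
  rw [gradient_fun_const, lap_const, mul_zero] at h
  linarith [hM xm, mul_le_mul_of_nonneg_left (hxm x) hlam]

theorem exists_forall_doubling_le {f g : Em n → ℝ} (hfc : Continuous f) (hgc : Continuous g)
    (hfp : ZPeriodic f) (hgp : ZPeriodic g) {a : ℝ} (ha : 0 < a) :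
    ∃ xb yb, ∀ x y, f x - g y - a * ‖x - y‖ ^ 2 ≤ f xb - g yb - a * ‖xb - yb‖ ^ 2 := by
  obtain ⟨x₁, hx₁⟩ := hfp.exists_forall_ge hfc
  obtain ⟨x₂, hx₂⟩ := hgp.exists_forall_le hgc
  have hquad : ∀ d : ℝ, d - 1 / (4 * a) ≤ a * d ^ 2 := fun d => by
    have : a * (1 / (4 * a)) = 1 / 4 := by field_simp
    nlinarith [sq_nonneg (a * d - 1 / 2)]
  obtain ⟨⟨xb, yb⟩, h⟩ := exists_forall_ge_of_diag_periodic
    (Ψ := fun q => f q.1 - g q.2 - a * ‖q.1 - q.2‖ ^ 2) (by fun_prop)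
    (fun x y k => by simp [hfp x k, hgp y k]) (B := f x₁ - g x₂ + 1 / (4 * a))
    (fun x y => by linarith [hx₁ x, hx₂ y, hquad ‖x - y‖])
  exact ⟨xb, yb, h⟩

theorem IsViscousSubsol.mul_sub_le {lam ε₁ ε₂ a M K : ℝ} {C : ℝ≥0} {f g : Em n → ℝ}
    (hf : IsViscousSubsol H lam ε₁ f) (hg : IsViscousSupersol H lam ε₂ g)
    (hfc : Continuous f) (hgc : Continuous g) (hfp : ZPeriodic f) (hgp : ZPeriodic g)
    (hlam : 0 ≤ lam) (ha : 0 < a) (hfM : ∀ x, -M ≤ lam * f x)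
    (hK : ∀ x p, H (x, p) ≤ 2 * a * n * ε₁ + M → ‖p‖ ≤ K)
    (hC : ∀ p : Em n, ‖p‖ ≤ K → LipschitzWith C fun x => H (x, p)) (z : Em n) :
    lam * (f z - g z) ≤ 2 * a * n * (ε₁ + ε₂) + C * K / (2 * a) := by
  obtain ⟨xb, yb, hmax⟩ := exists_forall_doubling_le hfc hgc hfp hgp ha
  set p := (2 * a) • (xb - yb)
  have hsub : lam * f xb + H (xb, p) ≤ 2 * a * n * ε₁ := by
    have := hf (fun x => a * ‖x - yb‖ ^ 2) (contDiff_mul_norm_sub_sq _ _) xb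
      (.of_forall fun x => by linarith [hmax x yb])
    rw [(hasGradientAt_mul_norm_sub_sq a yb xb).gradient, lap_mul_norm_sub_sq] at this
    linarith
  have hsuper : -(2 * a * n * ε₂) ≤ lam * g yb + H (yb, p) := by
    have := hg (fun y => -a * ‖y - xb‖ ^ 2) (contDiff_mul_norm_sub_sq _ _) yb
      (.of_forall fun y => by
        have := hmax xb y
        rw [norm_sub_rev xb y, norm_sub_rev xb yb] at this
        dsimp only
        linarith)
    rw [(hasGradientAt_mul_norm_sub_sq (-a) xb yb).gradient, lap_mul_norm_sub_sq] at this
    have hgrad : (2 * -a) • (yb - xb) = p := by simp only [p]; module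
    rw [hgrad] at this
    linarith
  have hpK : ‖p‖ ≤ K := hK xb p (by linarith [hfM xb])
  have hdist : ‖yb - xb‖ ≤ K / (2 * a) := by
    rw [le_div_iff₀ (by positivity), norm_sub_rev]
    simpa [p, norm_smul, abs_of_pos ha, mul_comm] using hpK
  have hlip : H (yb, p) - H (xb, p) ≤ C * (K / (2 * a)) :=
    (le_abs_self _).trans <| ((hC p hpK).dist_le_mul yb xb).trans <|
      mul_le_mul_of_nonneg_left (by rwa [dist_eq_norm]) C.2
  have hdiag : f z - g z ≤ f xb - g yb := by
    have := hmax z z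
    rw [sub_self, norm_zero] at this
    linarith [mul_nonneg ha.le (sq_nonneg ‖xb - yb‖)]
  calc lam * (f z - g z) ≤ lam * (f xb - g yb) := mul_le_mul_of_nonneg_left hdiag hlam
    _ ≤ 2 * a * n * (ε₁ + ε₂) + C * K / (2 * a) := by
      rw [mul_div_assoc]; linarith

theorem abs_classicalSol_sub_viscositySol_le {lam eps M K : ℝ} {C : ℝ≥0} {u U : Em n → ℝ}
    (hlam : 0 < lam) (heps : eps ∈ Set.Ioc (0 : ℝ) 1) (hu : ViscositySol H lam u)
    (hU : ClassicalSol H lam eps U) (hM : ∀ x, |H (x, 0)| ≤ M)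
    (hK : ∀ x p, H (x, p) ≤ n + M → ‖p‖ ≤ K)
    (hC : ∀ p : Em n, ‖p‖ ≤ K → LipschitzWith C fun x => H (x, p)) (x : Em n) :
    |U x - u x| ≤ (n + C * K) * √eps / lam := by
  obtain ⟨heps0, heps1⟩ := heps
  have hσ : 0 < √eps := Real.sqrt_pos.2 heps0
  -- `a = 1 / (2√ε)` balances the viscous error `2anε` against the Lipschitz error `CK / (2a)`
  obtain ⟨a, h2a⟩ : ∃ a : ℝ, 2 * a = (√eps)⁻¹ := ⟨(√eps)⁻¹ / 2, by ring⟩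
  have ha : 0 < a := by linarith [inv_pos.2 hσ]
  have hval : ∀ e₁ e₂, e₁ + e₂ = eps →
      2 * a * n * (e₁ + e₂) + C * K / (2 * a) = (n + C * K) * √eps := fun e₁ e₂ he => by
    rw [he, h2a, ← Real.sq_sqrt heps0.le, Real.sqrt_sq hσ.le]
    field_simp
  have hvisc : 2 * a * n * eps ≤ n := by
    rw [h2a, ← Real.sq_sqrt heps0.le, Real.sqrt_sq hσ.le]
    field_simp
    nlinarith [Real.sqrt_le_one.2 heps1]
  have hUc := hU.1.continuous
  have hUlow := (hU.isViscousSupersol heps0.le).le_mul hUc hU.2.1 hlam.le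
    fun x => (abs_le.1 (hM x)).2
  have hulow := hu.isViscousSupersol.le_mul hu.1 hu.2.1 hlam.le fun x => (abs_le.1 (hM x)).2
  have hUu := (hU.isViscousSubsol heps0.le).mul_sub_le hu.isViscousSupersol hUc hu.1 hU.2.1 hu.2.1
    hlam.le ha hUlow (fun x p hp => hK x p (by linarith)) hC x
  have huU := hu.isViscousSubsol.mul_sub_le (hU.isViscousSupersol heps0.le) hu.1 hUc hu.2.1 hU.2.1
    hlam.le ha hulow (fun x p hp => hK x p (by linarith [Nat.cast_nonneg (α := ℝ) n])) hC x
  rw [hval _ _ (add_zero eps)] at hUu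
  rw [hval _ _ (zero_add eps)] at huU
  rw [abs_sub_le_iff, le_div_iff₀ hlam, le_div_iff₀ hlam]
  constructor <;> linarith

end ViscousSolutions

theorem TendstoUniformly.of_dist_le {ι α β : Type*} [PseudoMetricSpace β] {F G : ι → α → β}
    {f : α → β} {l : Filter ι} {b : ι → ℝ} (hF : TendstoUniformly F f l)
    (hb : Tendsto b l (𝓝 0)) (hFG : ∀ᶠ i in l, ∀ x, dist (F i x) (G i x) ≤ b i) :
    TendstoUniformly G f l := by
  rw [Metric.tendstoUniformly_iff] at hF ⊢
  intro δ hδ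
  filter_upwards [hF (δ / 2) (half_pos hδ), hb.eventually (eventually_lt_nhds (half_pos hδ)), hFG]
    with i hFi hbi hFGi x
  calc dist (f x) (G i x) ≤ dist (f x) (F i x) + dist (F i x) (G i x) := dist_triangle _ _ _
    _ < δ / 2 + δ / 2 := add_lt_add_of_lt_of_le (hFi x) ((hFGi x).trans hbi.le)
    _ = δ := add_halves δ

theorem viscous_discount_convergence_rough_general
    (n : ℕ) (H : Em n × Em n → ℝ) (hH : Tonelli H)
    (u : ℝ → Em n → ℝ) (hu : ∀ lam ∈ Set.Ioc (0:ℝ) 1, ViscositySol H lam (u lam))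
    (eps : ℝ → ℝ) (heps : ∀ lam ∈ Set.Ioc (0:ℝ) 1, eps lam ∈ Set.Ioc (0:ℝ) 1)
    (U : ℝ → Em n → ℝ) (hU : ∀ lam ∈ Set.Ioc (0:ℝ) 1, ClassicalSol H lam (eps lam) (U lam))
    (u₀ : Em n → ℝ)
    (hconv : TendstoUniformly u u₀ (nhdsWithin 0 (Set.Ioi 0)))
    (hmod : Filter.Tendsto (fun lam => eps lam / lam^2) (nhdsWithin 0 (Set.Ioi 0)) (nhds 0)) :
    TendstoUniformly U u₀ (nhdsWithin 0 (Set.Ioi 0)) := by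
  obtain ⟨M, hM⟩ := hH.exists_abs_le
  obtain ⟨K, hK⟩ := hH.exists_norm_le_of_le (n + M)
  obtain ⟨C, hC⟩ := exists_lipschitzWith_fst (hH.smooth.of_le one_le_two) hH.periodic K
  have hrate : Tendsto (fun lam => (n + C * K) * √(eps lam / lam ^ 2)) (𝓝[>] 0) (𝓝 0) := by
    simpa using ((Real.continuous_sqrt.tendsto 0).comp hmod).const_mul (n + C * K)
  refine hconv.of_dist_le hrate ?_
  filter_upwards [Ioc_mem_nhdsGT zero_lt_one] with lam hlam x
  rw [dist_comm, Real.dist_eq, Real.sqrt_div' _ (sq_nonneg lam), Real.sqrt_sq hlam.1.le,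
    ← mul_div_assoc]
  exact abs_classicalSol_sub_viscositySol_le hlam.1 (heps lam hlam) (hu lam hlam) (hU lam hlam)
    hM hK hC x

theorem viscous_discount_convergence_rough
    (n : ℕ) (hn : 1 ≤ n) (H : Em n × Em n → ℝ) (hH : Tonelli H)
    (u : ℝ → Em n → ℝ) (hu : ∀ lam ∈ Set.Ioc (0:ℝ) 1, ViscositySol H lam (u lam))
    (eps : ℝ → ℝ) (heps : ∀ lam ∈ Set.Ioc (0:ℝ) 1, eps lam ∈ Set.Ioc (0:ℝ) 1)
    (U : ℝ → Em n → ℝ) (hU : ∀ lam ∈ Set.Ioc (0:ℝ) 1, ClassicalSol H lam (eps lam) (U lam))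
    (u₀ : Em n → ℝ) (hu₀c : Continuous u₀) (hu₀p : ZPeriodic u₀)
    (hconv : TendstoUniformly u u₀ (nhdsWithin 0 (Set.Ioi 0)))
    (hmod : Filter.Tendsto (fun lam => eps lam / lam^2) (nhdsWithin 0 (Set.Ioi 0)) (nhds 0)) :
    TendstoUniformly U u₀ (nhdsWithin 0 (Set.Ioi 0)) :=
  viscous_discount_convergence_rough_general n H hH u hu eps heps U hU u₀ hconv hmod
end
end
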